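/- For each 0 < ε < 1/2 and each positive integer k, every 2-edge-colored complete graph on n ≥ 2^{2k} vertices contains, in one of the two colors, a k-cylinder V_1 × ... × V_k with parts of equal size such that every pair (V_i, V_j), 1 ≤ i < j ≤ k, is ε-regular with density at least 1/2 in that color, and the size of each part is at least (1/(2·2^{2k}))·ε^{2^{4k}·ε^{−5}}·n. -/

import Mathlib

/-- The density of the pair of vertex sets `(A, B)` in the graph `G`:
`d(A,B) = e(A,B) / (|A| |B|)`. -/
noncomputable def density {V : Type*} (G : SimpleGraph V) (A B : Finset V) : ℝ :=
  ({p : V × V | p.1 ∈ A ∧ p.2 ∈ B ∧ G.Adj p.1 p.2}.ncard : ℝ) / ((A.card : ℝ) * (B.card : ℝ))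

/-- The pair `(A, B)` is `ε`-regular in `G`: for all `X ⊆ A`, `Y ⊆ B` with
`|X| > ε|A|` and `|Y| > ε|B|`, one has `|d(X,Y) - d(A,B)| < ε`. -/
def EpsRegular {V : Type*} (G : SimpleGraph V) (ε : ℝ) (A B : Finset V) : Prop :=
  ∀ X ⊆ A, ∀ Y ⊆ B, ε * (A.card : ℝ) < (X.card : ℝ) → ε * (B.card : ℝ) < (Y.card : ℝ) →
    |density G X Y - density G A B| < ε

/-- The number of neighbors of the vertex `a` inside the set `B`. -/
noncomputable def degIn {V : Type*} (G : SimpleGraph V) (a : V) (B : Finset V) : ℕ :=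
  {b : V | b ∈ B ∧ G.Adj a b}.ncard

/-- The pair `(A, B)` is `(ε, d, δ)`-super-regular in `G`: it is `ε`-regular, has
density at least `d`, every vertex of `A` has at least `δ|B|` neighbors in `B`, and
every vertex of `B` has at least `δ|A|` neighbors in `A`. -/
def SuperRegular {V : Type*} (G : SimpleGraph V) (ε d δ : ℝ) (A B : Finset V) : Prop :=
  EpsRegular G ε A B ∧ d ≤ density G A B ∧
    (∀ a ∈ A, δ * (B.card : ℝ) ≤ (degIn G a B : ℝ)) ∧
    (∀ b ∈ B, δ * (A.card : ℝ) ≤ (degIn G b A : ℝ))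


/-!
Split the vertices into `K = C(2k-2, k-1)` disjoint parts of equal size and run an energy
increment on this family, the energy being `∑_{i ≠ j} d(Wᵢ, Wⱼ)² ≤ K²`. Replacing one part by a
random piece of it whose densities average to the old ones raises the expected energy by the
variance of those densities (convexity of `x ↦ x²`). This is used twice. If `(Wᵢ, Wⱼ)` is not
`ε`-regular, splitting `Wᵢ` and `Wⱼ` along the witnesses `X, Y` gains more than `ε⁴` on average
over the four pairs of pieces, so some pair of pieces, each of relative size more than
`η = ε⁴ / (8K²)`, gains `ε⁴/2`. And cutting all parts down to the smallest size by uniformly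
random subsets loses nothing on average. Hence after at most `⌈2K²/ε⁴⌉` rounds all pairs are
`ε`-regular, and the parts still have size at least `η ^ ⌈2K²/ε⁴⌉ · n / (2K)`. Finally, the
Ramsey bound `R(k, k) ≤ C(2k-2, k-1)` applied to "red density at least `1/2`" gives `k` parts
whose pairwise red densities are all `≥ 1/2` or all `< 1/2`; in the second case the blue
densities are `> 1/2`, and regularity passes to the complement.
-/

open Finset

section Density

variable {V : Type*} (G : SimpleGraph V)

theorem density_eq_edgeDensity [DecidableRel G.Adj] (A B : Finset V) :
    density G A B = G.edgeDensity A B := by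
  have hset : {p : V × V | p.1 ∈ A ∧ p.2 ∈ B ∧ G.Adj p.1 p.2} = G.interedges A B := by
    ext p
    simp [SimpleGraph.mem_interedges_iff]
  rw [density, hset, Set.ncard_coe_finset, SimpleGraph.edgeDensity_def]
  push_cast
  rfl

theorem density_comm (A B : Finset V) : density G A B = density G B A := by
  classical
  rw [density_eq_edgeDensity, density_eq_edgeDensity, G.edgeDensity_comm]

theorem density_nonneg (A B : Finset V) : 0 ≤ density G A B := by
  classical
  rw [density_eq_edgeDensity]
  exact_mod_cast G.edgeDensity_nonneg A B

theorem density_le_one (A B : Finset V) : density G A B ≤ 1 := by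
  classical
  rw [density_eq_edgeDensity]
  exact_mod_cast G.edgeDensity_le_one A B

theorem density_compl {A B : Finset V} (hA : A.Nonempty) (hB : B.Nonempty)
    (hAB : Disjoint A B) : density Gᶜ A B = 1 - density G A B := by
  classical
  rw [density_eq_edgeDensity, density_eq_edgeDensity, eq_sub_iff_add_eq, add_comm]
  exact_mod_cast G.edgeDensity_add_edgeDensity_compl hA hB hAB

theorem card_mul_density [DecidableRel G.Adj] (A B : Finset V) :
    #A * density G A B = #(G.interedges A B) / #B := by
  rw [density_eq_edgeDensity, ← SimpleGraph.card_interedges_div_card]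
  rcases A.eq_empty_or_nonempty with rfl | hA
  · simp
  have : (#A : ℝ) ≠ 0 := by exact_mod_cast hA.card_ne_zero
  push_cast
  field_simp

theorem EpsRegular.compl {ε : ℝ} (hε : 0 ≤ ε) {A B : Finset V} (hAB : Disjoint A B)
    (h : EpsRegular G ε A B) : EpsRegular Gᶜ ε A B := by
  intro X hX Y hY hXc hYc
  have hXne : X.Nonempty :=
    card_pos.1 (by exact_mod_cast (by positivity : 0 ≤ ε * #A).trans_lt hXc)
  have hYne : Y.Nonempty :=
    card_pos.1 (by exact_mod_cast (by positivity : 0 ≤ ε * #B).trans_lt hYc)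
  rw [density_compl G hXne hYne (hAB.mono hX hY),
    density_compl G (hXne.mono hX) (hYne.mono hY) hAB, sub_sub_sub_cancel_left, abs_sub_comm]
  exact h X hX Y hY hXc hYc

variable [DecidableEq V]

theorem density_eq_add_density_sdiff {W X : Finset V} (hX : X ⊆ W) (hW : W.Nonempty)
    (U : Finset V) :
    #X / #W * density G X U + #(W \ X) / #W * density G (W \ X) U = density G W U := by
  classical
  have hunion : G.interedges W U = G.interedges X U ∪ G.interedges (W \ X) U := by
    ext e
    simp only [mem_union, SimpleGraph.mem_interedges_iff, mem_sdiff]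
    constructor
    · rintro ⟨h1, h2, h3⟩
      by_cases hx : e.1 ∈ X
      exacts [.inl ⟨hx, h2, h3⟩, .inr ⟨⟨h1, hx⟩, h2, h3⟩]
    · rintro (⟨h1, h2, h3⟩ | ⟨⟨h1, -⟩, h2, h3⟩)
      exacts [⟨hX h1, h2, h3⟩, ⟨h1, h2, h3⟩]
  have hcard : #(G.interedges W U) = #(G.interedges X U) + #(G.interedges (W \ X) U) := by
    rw [hunion, card_union_of_disjoint (G.interedges_disjoint_left disjoint_sdiff U)]
  have key : (#W : ℝ) * density G W U =
      #X * density G X U + #(W \ X) * density G (W \ X) U := by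
    simp only [card_mul_density, hcard]
    push_cast
    ring
  rw [div_mul_eq_mul_div, div_mul_eq_mul_div, ← add_div, ← key,
    mul_div_cancel_left₀ _ (by exact_mod_cast hW.card_ne_zero)]

theorem sum_card_interedges_powersetCard [DecidableRel G.Adj] {r : ℕ} (hr : 0 < r)
    (W U : Finset V) :
    ∑ T ∈ W.powersetCard r, #(G.interedges T U) =
      (#W - 1).choose (r - 1) * #(G.interedges W U) := by
  have hfilter : ∀ T ∈ W.powersetCard r,
      G.interedges T U = (G.interedges W U).filter (·.1 ∈ T) := fun T hT => by
    ext e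
    simp only [SimpleGraph.mem_interedges_iff, mem_filter]
    have hTW := (mem_powersetCard.1 hT).1
    constructor
    · rintro ⟨h1, h2, h3⟩
      exact ⟨⟨hTW h1, h2, h3⟩, h1⟩
    · rintro ⟨⟨-, h2, h3⟩, h1⟩
      exact ⟨h1, h2, h3⟩
  have hcount : ∀ e ∈ G.interedges W U,
      #((W.powersetCard r).filter (e.1 ∈ ·)) = (#W - 1).choose (r - 1) := fun e he => by
    simpa using card_filter_powersetCard_subset {e.1} W r
      (singleton_subset_iff.2 (G.mem_interedges_iff.1 he).1)
      (by simpa [Nat.one_le_iff_ne_zero] using hr.ne')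
  calc ∑ T ∈ W.powersetCard r, #(G.interedges T U)
      = ∑ T ∈ W.powersetCard r, ∑ e ∈ G.interedges W U, if e.1 ∈ T then 1 else 0 :=
        sum_congr rfl fun T hT => by rw [hfilter T hT, card_filter]
    _ = ∑ e ∈ G.interedges W U, (#W - 1).choose (r - 1) := by
        rw [sum_comm]
        exact sum_congr rfl fun e he => by rw [← card_filter, hcount e he]
    _ = _ := by rw [sum_const, smul_eq_mul, mul_comm]

theorem sum_density_powersetCard {r : ℕ} (hr : 0 < r) {W : Finset V} (hrW : r ≤ #W)
    (U : Finset V) :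
    ∑ T ∈ W.powersetCard r, density G T U = (#W).choose r * density G W U := by
  classical
  have hchoose : (#W : ℝ) * (#W - 1).choose (r - 1) = r * (#W).choose r := by
    obtain ⟨n, hn⟩ : ∃ n, #W = n + 1 := ⟨#W - 1, by omega⟩
    obtain ⟨k, rfl⟩ : ∃ k, r = k + 1 := ⟨r - 1, by omega⟩
    rw [hn]
    exact_mod_cast (Nat.add_one_mul_choose_eq n k).trans (mul_comm _ _)
  apply mul_left_cancel₀ (show (r : ℝ) ≠ 0 by positivity)
  calc (r : ℝ) * ∑ T ∈ W.powersetCard r, density G T U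
      = ∑ T ∈ W.powersetCard r, #T * density G T U := by
        rw [mul_sum]
        exact sum_congr rfl fun T hT => by rw [(mem_powersetCard.1 hT).2]
    _ = (∑ T ∈ W.powersetCard r, #(G.interedges T U) : ℕ) / #U := by
        simp only [card_mul_density, ← sum_div]
        push_cast
        rfl
    _ = (#W - 1).choose (r - 1) * (#W * density G W U) := by
        rw [sum_card_interedges_powersetCard G hr, card_mul_density]
        push_cast
        ring
    _ = r * ((#W).choose r * density G W U) := by
        rw [← mul_assoc, ← mul_assoc, mul_comm _ (#W : ℝ), hchoose]

def splitBy (W X : Finset V) (b : Bool) : Finset V :=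
  bif b then X else W \ X

theorem splitBy_subset {W X : Finset V} (hX : X ⊆ W) (b : Bool) : splitBy W X b ⊆ W := by
  cases b
  exacts [sdiff_subset, hX]

theorem card_splitBy_div_le_one {W X : Finset V} (hX : X ⊆ W) (b : Bool) :
    (#(splitBy W X b) : ℝ) / #W ≤ 1 :=
  div_le_one_of_le₀ (by exact_mod_cast card_le_card (splitBy_subset hX b)) (by positivity)

theorem sum_card_splitBy_div {W X : Finset V} (hX : X ⊆ W) (hW : W.Nonempty) :
    ∑ b, (#(splitBy W X b) : ℝ) / #W = 1 := by
  rw [Fintype.sum_bool, ← add_div, div_eq_one_iff_eq (by exact_mod_cast hW.card_ne_zero)]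
  exact_mod_cast (add_comm _ _).trans (card_sdiff_add_card_eq_card hX)

theorem sum_card_splitBy_div_mul_density {W X : Finset V} (hX : X ⊆ W) (hW : W.Nonempty)
    (U : Finset V) :
    ∑ b, (#(splitBy W X b) : ℝ) / #W * density G (splitBy W X b) U = density G W U := by
  rw [Fintype.sum_bool]
  exact density_eq_add_density_sdiff G hX hW U

end Density

theorem sum_mul_sq_eq_sq_add_sum_mul_sq_sub {κ : Type*} {s : Finset κ} {w x : κ → ℝ}
    (hw : ∑ i ∈ s, w i = 1) :
    ∑ i ∈ s, w i * x i ^ 2 =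
      (∑ i ∈ s, w i * x i) ^ 2 + ∑ i ∈ s, w i * (x i - ∑ j ∈ s, w j * x j) ^ 2 := by
  set m := ∑ j ∈ s, w j * x j with hm
  clear_value m
  have : ∑ i ∈ s, w i * (x i - m) ^ 2 =
      ∑ i ∈ s, w i * x i ^ 2 - 2 * m * ∑ i ∈ s, w i * x i + m ^ 2 * ∑ i ∈ s, w i := by
    rw [mul_sum, mul_sum, ← sum_sub_distrib, ← sum_add_distrib]
    exact sum_congr rfl fun i _ => by ring
  rw [this, ← hm, hw]
  ring

theorem exists_lt_and_lt_of_lt_sum_mul {κ : Type*} {s : Finset κ} {w f : κ → ℝ} {c η M : ℝ}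
    (hw : ∀ x ∈ s, 0 ≤ w x) (hw1 : ∑ x ∈ s, w x = 1) (hf : ∀ x ∈ s, f x ≤ M) (hc : 0 ≤ c)
    (hη : 0 ≤ η) (hM : 0 ≤ M) (h : c + #s * (η * M) < ∑ x ∈ s, w x * f x) :
    ∃ x ∈ s, η < w x ∧ c < f x := by
  by_contra! hsmall
  have hterm : ∀ x ∈ s, w x * f x ≤ c * w x + η * M := fun x hx => by
    by_cases hwx : η < w x
    · nlinarith [hsmall x hx hwx, hw x hx, mul_nonneg hη hM]
    · nlinarith [hf x hx, hw x hx, mul_nonneg hc (hw x hx)]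
  have := sum_le_sum hterm
  rw [sum_add_distrib, ← mul_sum, hw1, sum_const, nsmul_eq_mul] at this
  linarith

section Energy

variable {V ι : Type*} (G : SimpleGraph V)

theorem sum_mul_density_update_sq_sub [DecidableEq ι] (W : ι → Finset V) {κ : Type*}
    {s : Finset κ} {w : κ → ℝ} {T : κ → Finset V} {a : ι} (hw1 : ∑ x ∈ s, w x = 1)
    (hmean : ∀ U, ∑ x ∈ s, w x * density G (T x) U = density G (W a) U) {l l' : ι}
    (hll' : l ≠ l') :
    ∑ x ∈ s, w x * density G (Function.update W a (T x) l) (Function.update W a (T x) l') ^ 2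
        - density G (W l) (W l') ^ 2 =
      if l = a then ∑ x ∈ s, w x * (density G (T x) (W l') - density G (W a) (W l')) ^ 2
      else if l' = a then ∑ x ∈ s, w x * (density G (T x) (W l) - density G (W a) (W l)) ^ 2
      else 0 := by
  have hvar : ∀ U, ∑ x ∈ s, w x * density G (T x) U ^ 2 - density G (W a) U ^ 2 =
      ∑ x ∈ s, w x * (density G (T x) U - density G (W a) U) ^ 2 := fun U => by
    rw [sum_mul_sq_eq_sq_add_sum_mul_sq_sub hw1, hmean]
    ring
  split_ifs with hl hl'
  · subst hl
    simp only [Function.update_self, Function.update_of_ne hll'.symm, hvar]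
  · subst hl'
    simp only [Function.update_self, Function.update_of_ne hll', density_comm G (W l) (W l'),
      ← hvar]
    exact congrArg (· - _) (sum_congr rfl fun x _ => by rw [density_comm])
  · simp only [Function.update_of_ne hl, Function.update_of_ne hl', ← sum_mul, hw1, one_mul,
      sub_self]

variable [Fintype ι]

noncomputable def energy (W : ι → Finset V) : ℝ :=
  ∑ p ∈ (univ : Finset ι).offDiag, density G (W p.1) (W p.2) ^ 2

theorem energy_nonneg (W : ι → Finset V) : 0 ≤ energy G W :=
  sum_nonneg fun _ _ => sq_nonneg _

theorem energy_le_card_sq (W : ι → Finset V) : energy G W ≤ Fintype.card ι ^ 2 := by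
  have hterm : ∀ p ∈ (univ : Finset ι).offDiag, density G (W p.1) (W p.2) ^ 2 ≤ 1 := fun p _ =>
    pow_le_one₀ (density_nonneg G _ _) (density_le_one G _ _)
  have hcard : (#(univ : Finset ι).offDiag : ℝ) ≤ Fintype.card ι ^ 2 := by
    rw [offDiag_card, card_univ]
    exact_mod_cast (Nat.sub_le _ _).trans (sq _).ge
  calc energy G W ≤ #(univ : Finset ι).offDiag • (1 : ℝ) := sum_le_card_nsmul _ _ _ hterm
    _ ≤ Fintype.card ι ^ 2 := by rwa [nsmul_eq_mul, mul_one]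

variable [DecidableEq ι] (W : ι → Finset V) {κ : Type*} {s : Finset κ} {w : κ → ℝ}
  {T : κ → Finset V}

theorem energy_add_le_sum_energy_update {a j : ι} (haj : a ≠ j) (hw : ∀ x ∈ s, 0 ≤ w x)
    (hw1 : ∑ x ∈ s, w x = 1)
    (hmean : ∀ U, ∑ x ∈ s, w x * density G (T x) U = density G (W a) U) :
    energy G W + 2 * ∑ x ∈ s, w x * (density G (T x) (W j) - density G (W a) (W j)) ^ 2 ≤
      ∑ x ∈ s, w x * energy G (Function.update W a (T x)) := by
  set gain : ι × ι → ℝ := fun p =>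
    ∑ x ∈ s, w x * density G (Function.update W a (T x) p.1) (Function.update W a (T x) p.2) ^ 2
      - density G (W p.1) (W p.2) ^ 2
  have hgain : ∀ p ∈ (univ : Finset ι).offDiag, 0 ≤ gain p := fun p hp => by
    simp only [gain, sum_mul_density_update_sq_sub G W hw1 hmean (mem_offDiag.1 hp).2.2]
    split_ifs <;> first
      | exact le_rfl
      | exact sum_nonneg fun x hx => mul_nonneg (hw x hx) (sq_nonneg _)
  have hsub : ({(a, j), (j, a)} : Finset (ι × ι)) ⊆ (univ : Finset ι).offDiag := by
    simp [insert_subset_iff, haj, haj.symm]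
  have hpair : ∑ p ∈ ({(a, j), (j, a)} : Finset (ι × ι)), gain p =
      2 * ∑ x ∈ s, w x * (density G (T x) (W j) - density G (W a) (W j)) ^ 2 := by
    rw [sum_pair (by simp [haj])]
    simp only [gain, sum_mul_density_update_sq_sub G W hw1 hmean haj,
      sum_mul_density_update_sq_sub G W hw1 hmean haj.symm, if_true, if_neg haj.symm]
    ring
  have hsplit : ∑ x ∈ s, w x * energy G (Function.update W a (T x)) =
      energy G W + ∑ p ∈ (univ : Finset ι).offDiag, gain p := by
    simp only [energy, gain, mul_sum, sum_sub_distrib]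
    rw [sum_comm]
    ring
  rw [hsplit, ← hpair]
  linarith [sum_le_sum_of_subset_of_nonneg hsub fun p hp _ => hgain p hp]

theorem energy_le_sum_energy_update (a : ι) (hw : ∀ x ∈ s, 0 ≤ w x) (hw1 : ∑ x ∈ s, w x = 1)
    (hmean : ∀ U, ∑ x ∈ s, w x * density G (T x) U = density G (W a) U) :
    energy G W ≤ ∑ x ∈ s, w x * energy G (Function.update W a (T x)) := by
  by_cases hι : ∃ j, j ≠ a
  · obtain ⟨j, hj⟩ := hι
    have := energy_add_le_sum_energy_update G W hj.symm hw hw1 hmean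
    have : 0 ≤ ∑ x ∈ s, w x * (density G (T x) (W j) - density G (W a) (W j)) ^ 2 :=
      sum_nonneg fun x hx => mul_nonneg (hw x hx) (sq_nonneg _)
    linarith
  · simp only [ne_eq, not_exists, not_not] at hι
    have hzero : ∀ W' : ι → Finset V, energy G W' = 0 := fun W' =>
      sum_eq_zero fun p hp => absurd ((hι _).trans (hι _).symm) (mem_offDiag.1 hp).2.2
    simp [hzero]

end Energy

section Refinement

variable {V ι : Type*} [DecidableEq V] [Fintype ι] [DecidableEq ι] (G : SimpleGraph V)

theorem exists_subset_card_eq_energy_le (W : ι → Finset V) (a : ι) {r : ℕ} (hr : 0 < r)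
    (hrW : r ≤ #(W a)) : ∃ T ⊆ W a, #T = r ∧ energy G W ≤ energy G (Function.update W a T) := by
  have hC : (0 : ℝ) < (#(W a)).choose r := by exact_mod_cast Nat.choose_pos hrW
  have hle := energy_le_sum_energy_update G W (s := (W a).powersetCard r)
    (w := fun _ => ((#(W a)).choose r : ℝ)⁻¹) (T := id) a (fun _ _ => by positivity)
    (by rw [sum_const, card_powersetCard, nsmul_eq_mul, mul_inv_cancel₀ hC.ne'])
    (fun U => by
      rw [← mul_sum, sum_congr rfl fun T _ => congrArg (density G · U) (id_eq T),
        sum_density_powersetCard G hr hrW, inv_mul_cancel_left₀ hC.ne'])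
  have havg : ∑ _T ∈ (W a).powersetCard r, ((#(W a)).choose r : ℝ)⁻¹ * energy G W =
      energy G W := by
    rw [sum_const, card_powersetCard, nsmul_eq_mul, mul_inv_cancel_left₀ hC.ne']
  obtain ⟨T, hT, hTE⟩ := exists_le_of_sum_le (powersetCard_nonempty.2 hrW) (havg.trans_le hle)
  exact ⟨T, (mem_powersetCard.1 hT).1, (mem_powersetCard.1 hT).2,
    le_of_mul_le_mul_left hTE (inv_pos.2 hC)⟩

theorem exists_card_eq_energy_le (W : ι → Finset V) {r : ℕ} (hr : 0 < r)
    (hrW : ∀ i, r ≤ #(W i)) :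
    ∃ W' : ι → Finset V, (∀ i, W' i ⊆ W i) ∧ (∀ i, #(W' i) = r) ∧ energy G W ≤ energy G W' := by
  suffices ∀ S : Finset ι, ∃ W' : ι → Finset V, (∀ i, W' i ⊆ W i) ∧ (∀ i ∈ S, #(W' i) = r) ∧
      (∀ i ∉ S, W' i = W i) ∧ energy G W ≤ energy G W' by
    obtain ⟨W', hsub, hcard, -, hE⟩ := this univ
    exact ⟨W', hsub, fun i => hcard i (mem_univ i), hE⟩
  intro S
  induction S using Finset.induction_on with
  | empty => exact ⟨W, fun _ => subset_rfl, by simp, fun _ _ => rfl, le_rfl⟩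
  | insert a S ha ih =>
    obtain ⟨W', hsub, hcard, hrest, hE⟩ := ih
    obtain ⟨T, hT, hTcard, hTE⟩ :=
      exists_subset_card_eq_energy_le G W' a hr (by rw [hrest a ha]; exact hrW a)
    refine ⟨Function.update W' a T, fun i => ?_, fun i hi => ?_, fun i hi => ?_, hE.trans hTE⟩
    all_goals
      rcases eq_or_ne i a with rfl | hia
      · simp_all
      · rw [Function.update_of_ne hia]
        simp_all

theorem energy_add_le_sum_energy_splitBy (W : ι → Finset V) {a l : ι} (hal : a ≠ l)
    {X : Finset V} (hX : X ⊆ W a) (hW : (W a).Nonempty) :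
    energy G W + 2 * (#X / #(W a)) * (density G X (W l) - density G (W a) (W l)) ^ 2 ≤
      ∑ b, #(splitBy (W a) X b) / #(W a) * energy G (Function.update W a (splitBy (W a) X b)) := by
  have := energy_add_le_sum_energy_update G W hal (fun _ _ => by positivity)
    (sum_card_splitBy_div hX hW) (sum_card_splitBy_div_mul_density G hX hW)
  have : 0 ≤ #(W a \ X) / #(W a) * (density G (W a \ X) (W l) - density G (W a) (W l)) ^ 2 := by
    positivity
  simp only [Fintype.sum_bool, splitBy, cond_true, cond_false] at *
  linarith

theorem energy_add_le_sum_energy_splitBy_splitBy (W : ι → Finset V) {i j : ι} (hij : i ≠ j)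
    {X Y : Finset V} (hX : X ⊆ W i) (hY : Y ⊆ W j) (hWi : (W i).Nonempty)
    (hWj : (W j).Nonempty) :
    energy G W + #X / #(W i) * (#Y / #(W j)) * (density G X Y - density G (W i) (W j)) ^ 2 ≤
      ∑ p : Bool × Bool, #(splitBy (W i) X p.1) / #(W i) * (#(splitBy (W j) Y p.2) / #(W j)) *
        energy G (Function.update (Function.update W i (splitBy (W i) X p.1)) j
          (splitBy (W j) Y p.2)) := by
  have hi := energy_add_le_sum_energy_splitBy G W hij hX hWi
  have hj := fun b => energy_add_le_sum_energy_splitBy G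
    (Function.update W i (splitBy (W i) X b)) hij.symm (X := Y)
    (by rwa [Function.update_of_ne hij.symm]) (by rwa [Function.update_of_ne hij.symm])
  have hβ1 := sum_card_splitBy_div hY hWj
  have hT := hj true
  have hF := hj false
  simp only [Fintype.sum_prod_type, Fintype.sum_bool, splitBy, cond_true, cond_false,
    Function.update_self, Function.update_of_ne hij.symm] at hi hT hF hβ1 ⊢
  set α : ℝ := #X / #(W i)
  set α' : ℝ := #(W i \ X) / #(W i)
  set β : ℝ := #Y / #(W j)
  have hα : 0 ≤ α := by positivity
  have hα' : 0 ≤ α' := by positivity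
  have hβ : 0 ≤ β := by positivity
  have hβ' : β ≤ 1 := by linarith [(by positivity : (0 : ℝ) ≤ #(W j \ Y) / #(W j))]
  set u := density G Y X - density G (W j) X
  set v := density G X (W j) - density G (W i) (W j)
  have hgain : α * β * (density G X Y - density G (W i) (W j)) ^ 2 ≤
      2 * α * v ^ 2 + α * (2 * β * u ^ 2) := by
    have huv : density G X Y - density G (W i) (W j) = u + v := by
      simp only [u, v, density_comm G Y X, density_comm G (W j) X]
      ring
    rw [huv]
    nlinarith [mul_nonneg (mul_nonneg hα hβ) (sq_nonneg (u - v)),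
      mul_nonneg (mul_nonneg hα (by linarith : (0 : ℝ) ≤ 1 - β)) (sq_nonneg v)]
  nlinarith [mul_le_mul_of_nonneg_left hT hα, mul_le_mul_of_nonneg_left hF hα',
    mul_nonneg hα' (mul_nonneg (by positivity : (0 : ℝ) ≤ 2 * β) (sq_nonneg
      (density G Y (W i \ X) - density G (W j) (W i \ X))))]

end Refinement

theorem pow_four_lt_mul_mul_sq {ε α β δ : ℝ} (hε : 0 < ε) (hα : ε < α) (hβ : ε < β)
    (hδ : ε ≤ |δ|) : ε ^ 4 < α * β * δ ^ 2 := by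
  have hsq : ε ^ 2 ≤ δ ^ 2 := by simpa only [sq_abs] using pow_le_pow_left₀ hε.le hδ 2
  calc ε ^ 4 = ε * ε * ε ^ 2 := by ring
    _ < α * β * ε ^ 2 := by gcongr
    _ ≤ α * β * δ ^ 2 := by gcongr; exact (mul_pos (hε.trans hα) (hε.trans hβ)).le

section Increment

variable {V ι : Type*} [DecidableEq V] [Fintype ι] [DecidableEq ι] (G : SimpleGraph V)

theorem exists_energy_increment (W : ι → Finset V) {i j : ι} (hij : i ≠ j) {ε : ℝ} (hε : 0 < ε)
    (h : ¬EpsRegular G ε (W i) (W j)) :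
    ∃ A ⊆ W i, ∃ B ⊆ W j, ε ^ 4 / (8 * Fintype.card ι ^ 2) * #(W i) < #A ∧
      ε ^ 4 / (8 * Fintype.card ι ^ 2) * #(W j) < #B ∧
      energy G W + ε ^ 4 / 2 ≤ energy G (Function.update (Function.update W i A) j B) := by
  simp only [EpsRegular, not_forall, not_lt, exists_prop] at h
  obtain ⟨X, hX, Y, hY, hXc, hYc, hdev⟩ := h
  have hWi : 0 < #(W i) := card_pos.2 <| (card_pos.1 <| by
    exact_mod_cast (by positivity : 0 ≤ ε * #(W i)).trans_lt hXc).mono hX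
  have hWj : 0 < #(W j) := card_pos.2 <| (card_pos.1 <| by
    exact_mod_cast (by positivity : 0 ≤ ε * #(W j)).trans_lt hYc).mono hY
  have hgain := pow_four_lt_mul_mul_sq (α := #X / #(W i)) (β := #Y / #(W j)) hε
    (by rwa [lt_div_iff₀ (by exact_mod_cast hWi)]) (by rwa [lt_div_iff₀ (by exact_mod_cast hWj)])
    hdev
  have hcard : (0 : ℝ) < Fintype.card ι := by exact_mod_cast Fintype.card_pos_iff.2 ⟨i⟩
  set w : Bool × Bool → ℝ := fun p =>
    #(splitBy (W i) X p.1) / #(W i) * (#(splitBy (W j) Y p.2) / #(W j))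
  have hw1 : ∑ p, w p = 1 := by
    rw [Fintype.sum_prod_type]
    simp only [w]
    rw [← sum_mul_sum, sum_card_splitBy_div hX (card_pos.1 hWi),
      sum_card_splitBy_div hY (card_pos.1 hWj), one_mul]
  obtain ⟨p, -, hwp, hEp⟩ := exists_lt_and_lt_of_lt_sum_mul (s := univ) (w := w)
    (f := fun p => energy G (Function.update (Function.update W i (splitBy (W i) X p.1)) j
      (splitBy (W j) Y p.2)))
    (c := energy G W + ε ^ 4 / 2) (η := ε ^ 4 / (8 * Fintype.card ι ^ 2))
    (M := Fintype.card ι ^ 2) (fun _ _ => by positivity) hw1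
    (fun _ _ => energy_le_card_sq G _) (by linarith [energy_nonneg G W, pow_pos hε 4])
    (by positivity) (by positivity) (by
      have := energy_add_le_sum_energy_splitBy_splitBy G W hij hX hY (card_pos.1 hWi)
        (card_pos.1 hWj)
      rw [card_univ, Fintype.card_prod, Fintype.card_bool]
      field_simp
      push_cast
      linarith)
  refine ⟨_, splitBy_subset hX p.1, _, splitBy_subset hY p.2, ?_, ?_, hEp.le⟩
  · have := hwp.trans_le (mul_le_of_le_one_right (by positivity) (card_splitBy_div_le_one hY p.2))
    rwa [lt_div_iff₀ (by exact_mod_cast hWi)] at this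
  · have := hwp.trans_le (mul_le_of_le_one_left (by positivity) (card_splitBy_div_le_one hX p.1))
    rwa [lt_div_iff₀ (by exact_mod_cast hWj)] at this

theorem exists_card_eq_energy_increment (W : ι → Finset V) {m : ℕ} (hW : ∀ i, #(W i) = m)
    {i j : ι} (hij : i ≠ j) {ε : ℝ} (hε : 0 < ε) (h : ¬EpsRegular G ε (W i) (W j)) :
    ∃ (m' : ℕ) (W' : ι → Finset V), (∀ l, W' l ⊆ W l) ∧ (∀ l, #(W' l) = m') ∧
      ε ^ 4 / (8 * Fintype.card ι ^ 2) * m ≤ m' ∧ energy G W + ε ^ 4 / 2 ≤ energy G W' := by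
  obtain ⟨A, hA, B, hB, hAc, hBc, hE⟩ := exists_energy_increment G W hij hε h
  rw [hW] at hAc hBc
  have hW₁ : ∀ l, Function.update (Function.update W i A) j B l =
      if l = j then B else if l = i then A else W l := fun l => by
    simp only [Function.update_apply]
  have hsub : ∀ l, Function.update (Function.update W i A) j B l ⊆ W l := fun l => by
    rw [hW₁]
    split_ifs with hlj hli
    exacts [hlj ▸ hB, hli ▸ hA, subset_rfl]
  have hmin : ∀ l, min #A #B ≤ #(Function.update (Function.update W i A) j B l) := fun l => by
    rw [hW₁]
    split_ifs
    · exact min_le_right _ _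
    · exact min_le_left _ _
    · exact (min_le_left _ _).trans ((card_le_card hA).trans (by rw [hW i, hW l]))
  have hη : 0 ≤ ε ^ 4 / (8 * Fintype.card ι ^ 2) * m := by positivity
  have hpos : 0 < min #A #B :=
    lt_min (Nat.cast_pos.1 (hη.trans_lt hAc)) (Nat.cast_pos.1 (hη.trans_lt hBc))
  obtain ⟨W', hsub', hcard', hE'⟩ := exists_card_eq_energy_le G _ hpos hmin
  refine ⟨min #A #B, W', fun l => (hsub' l).trans (hsub l), hcard', ?_, hE.trans hE'⟩
  push_cast
  exact le_min hAc.le hBc.le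

theorem exists_pairwise_epsRegular_of_le_energy {ε : ℝ} (hε : 0 < ε) (hε1 : ε ≤ 1) (N : ℕ)
    (W : ι → Finset V) {m : ℕ} (hW : ∀ i, #(W i) = m)
    (hE : Fintype.card ι ^ 2 - N * (ε ^ 4 / 2) ≤ energy G W) :
    ∃ (m' : ℕ) (W' : ι → Finset V), (∀ i, W' i ⊆ W i) ∧ (∀ i, #(W' i) = m') ∧
      (ε ^ 4 / (8 * Fintype.card ι ^ 2)) ^ N * m ≤ m' ∧
      ∀ i j, i ≠ j → EpsRegular G ε (W' i) (W' j) := by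
  induction N generalizing m W with
  | zero =>
    refine ⟨m, W, fun _ => subset_rfl, hW, by simp, fun i j hij => ?_⟩
    by_contra hirr
    obtain ⟨_, W₁, -, -, -, hE₁⟩ := exists_card_eq_energy_increment G W hW hij hε hirr
    simp only [CharP.cast_eq_zero, zero_mul, sub_zero] at hE
    linarith [energy_le_card_sq G W₁, pow_pos hε 4]
  | succ N ih =>
    by_cases hreg : ∀ i j, i ≠ j → EpsRegular G ε (W i) (W j)
    · have hη : ε ^ 4 / (8 * Fintype.card ι ^ 2) ≤ 1 := by
        rcases (Fintype.card ι).eq_zero_or_pos with h | h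
        · simp [h]
        · rw [div_le_one (by positivity)]
          nlinarith [pow_le_one₀ hε.le hε1 (n := 4), (Nat.one_le_cast (α := ℝ)).2 h]
      exact ⟨m, W, fun _ => subset_rfl, hW,
        mul_le_of_le_one_left (by positivity) (pow_le_one₀ (by positivity) hη), hreg⟩
    · simp only [not_forall] at hreg
      obtain ⟨i, j, hij, hirr⟩ := hreg
      obtain ⟨m₁, W₁, hsub₁, hcard₁, hm₁, hE₁⟩ :=
        exists_card_eq_energy_increment G W hW hij hε hirr
      obtain ⟨m₂, W₂, hsub₂, hcard₂, hm₂, hreg₂⟩ := ih W₁ hcard₁ (by push_cast at hE; linarith)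
      refine ⟨m₂, W₂, fun l => (hsub₂ l).trans (hsub₁ l), hcard₂, ?_, hreg₂⟩
      calc (ε ^ 4 / (8 * Fintype.card ι ^ 2)) ^ (N + 1) * m
          = (ε ^ 4 / (8 * Fintype.card ι ^ 2)) ^ N * (ε ^ 4 / (8 * Fintype.card ι ^ 2) * m) := by
            ring
        _ ≤ (ε ^ 4 / (8 * Fintype.card ι ^ 2)) ^ N * m₁ := by gcongr
        _ ≤ m₂ := hm₂

end Increment

theorem SimpleGraph.exists_isNClique_or_isNClique_compl {α : Type*} [DecidableEq α]
    (G : SimpleGraph α) : ∀ (a b : ℕ) (s : Finset α), (a + b).choose a ≤ #s →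
      ∃ t ⊆ s, G.IsNClique (a + 1) t ∨ Gᶜ.IsNClique (b + 1) t
  | 0, b, s, hs => by
    obtain ⟨x, hx⟩ := card_pos.1 (by simpa using hs)
    exact ⟨{x}, singleton_subset_iff.2 hx, .inl (isNClique_singleton.2 rfl)⟩
  | a + 1, 0, s, hs => by
    obtain ⟨x, hx⟩ := card_pos.1 (by simpa using hs)
    exact ⟨{x}, singleton_subset_iff.2 hx, .inr (isNClique_singleton.2 rfl)⟩
  | a + 1, b + 1, s, hs => by
    classical
    obtain ⟨x, hx⟩ := card_pos.1 ((Nat.choose_pos (by omega)).trans_le hs)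
    set N := (s.erase x).filter (G.Adj x)
    set N' := (s.erase x).filter (fun y => ¬G.Adj x y)
    have hN : N ⊆ s := (filter_subset _ _).trans (erase_subset _ _)
    have hN' : N' ⊆ s := (filter_subset _ _).trans (erase_subset _ _)
    have hcard : #N + #N' + 1 = #s := by
      rw [card_filter_add_card_filter_not, card_erase_add_one hx]
    have hchoose : (a + 1 + (b + 1)).choose (a + 1) =
        (a + (b + 1)).choose a + (b + (a + 1)).choose b := by
      rw [Nat.choose_symm_add (a := b), show b + (a + 1) = a + b + 1 by ring,
        show a + (b + 1) = a + b + 1 by ring, show a + 1 + (b + 1) = a + b + 1 + 1 by ring,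
        Nat.choose_succ_succ']
    rcases (by omega : (a + (b + 1)).choose a ≤ #N ∨ (b + (a + 1)).choose b ≤ #N') with h | h
    · obtain ⟨t, ht, hclique | hclique⟩ := G.exists_isNClique_or_isNClique_compl a (b + 1) N h
      · exact ⟨insert x t, insert_subset hx (ht.trans hN),
          .inl (hclique.insert fun y hy => (mem_filter.1 (ht hy)).2)⟩
      · exact ⟨t, ht.trans hN, .inr hclique⟩
    · obtain ⟨t, ht, hclique | hclique⟩ := Gᶜ.exists_isNClique_or_isNClique_compl b (a + 1) N' h
      · refine ⟨insert x t, insert_subset hx (ht.trans hN'), .inr (hclique.insert fun y hy => ?_)⟩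
        obtain ⟨hy, hxy⟩ := mem_filter.1 (ht hy)
        exact (G.compl_adj x y).2 ⟨(ne_of_mem_erase hy).symm, hxy⟩
      · exact ⟨t, ht.trans hN', .inl (by simpa using hclique)⟩
termination_by a b => a + b

theorem exists_color_clique_of_pairwise_epsRegular {V ι : Type*} [Fintype ι] [DecidableEq ι]
    (R : SimpleGraph V) {ε : ℝ} (hε : 0 ≤ ε) (W : ι → Finset V)
    (hdisj : ∀ i j, i ≠ j → Disjoint (W i) (W j)) (hne : ∀ i, (W i).Nonempty)
    (hreg : ∀ i j, i ≠ j → EpsRegular R ε (W i) (W j)) {k : ℕ}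
    (hk : (k + k).choose k ≤ Fintype.card ι) :
    ∃ G' : SimpleGraph V, (G' = R ∨ G' = Rᶜ) ∧ ∃ t : Finset ι, #t = k + 1 ∧
      ∀ i ∈ t, ∀ j ∈ t, i ≠ j → EpsRegular G' ε (W i) (W j) ∧ 1 / 2 ≤ density G' (W i) (W j) := by
  let H : SimpleGraph ι := SimpleGraph.fromRel fun i j => 1 / 2 ≤ density R (W i) (W j)
  obtain ⟨t, -, ht | ht⟩ := H.exists_isNClique_or_isNClique_compl k k univ (by simpa using hk)
  · refine ⟨R, .inl rfl, t, ht.card_eq, fun i hi j hj hij => ⟨hreg i j hij, ?_⟩⟩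
    obtain ⟨-, h | h⟩ := ht.1 hi hj hij
    exacts [h, density_comm R (W j) (W i) ▸ h]
  · refine ⟨Rᶜ, .inr rfl, t, ht.card_eq, fun i hi j hj hij =>
      ⟨(hreg i j hij).compl R hε (hdisj i j hij), ?_⟩⟩
    have h := ht.1 hi hj hij
    simp only [H, SimpleGraph.compl_adj, SimpleGraph.fromRel_adj, ne_eq, hij, not_false_eq_true,
      true_and, not_or, not_le] at h
    rw [density_compl R (hne i) (hne j) (hdisj i j hij)]
    linarith [h.1]

theorem exists_pairwise_disjoint_card_eq {V : Type*} [Fintype V] {K m : ℕ}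
    (h : K * m ≤ Fintype.card V) :
    ∃ W : Fin K → Finset V, (∀ i j, i ≠ j → Disjoint (W i) (W j)) ∧ ∀ i, #(W i) = m := by
  obtain ⟨f⟩ := Function.Embedding.nonempty_of_card_le (α := Fin K × Fin m) (β := V)
    (by simpa using h)
  refine ⟨fun i => univ.map ⟨fun x => f (i, x), fun x y hxy => (Prod.mk.inj (f.injective hxy)).2⟩,
    fun i j hij => ?_, fun i => by simp⟩
  simp only [disjoint_left, mem_map, mem_univ, true_and]
  rintro _ ⟨x, rfl⟩ ⟨y, hy⟩
  exact hij (Prod.mk.inj (f.injective hy)).1.symm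

-- Sharper than `centralBinom k ≤ 4 ^ k`: the factor `3k + 1` absorbs the `4k + 7` in
-- `mul_ceil_le_two_pow_mul_rpow`.
theorem Nat.centralBinom_sq_mul_le (k : ℕ) : k.centralBinom ^ 2 * (3 * k + 1) ≤ 16 ^ k := by
  induction k with
  | zero => simp
  | succ k ih =>
    have hrec := Nat.succ_mul_centralBinom_succ k
    have hpoly : 4 * (2 * k + 1) ^ 2 * (3 * (k + 1) + 1) ≤ 16 * (k + 1) ^ 2 * (3 * k + 1) := by
      ring_nf
      omega
    refine Nat.le_of_mul_le_mul_left ?_ (by positivity : 0 < (k + 1) ^ 2)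
    calc (k + 1) ^ 2 * ((k + 1).centralBinom ^ 2 * (3 * (k + 1) + 1))
        = ((k + 1) * (k + 1).centralBinom) ^ 2 * (3 * (k + 1) + 1) := by ring
      _ = 4 * (2 * k + 1) ^ 2 * (3 * (k + 1) + 1) * (k.centralBinom ^ 2) := by rw [hrec]; ring
      _ ≤ 16 * (k + 1) ^ 2 * (3 * k + 1) * (k.centralBinom ^ 2) := by gcongr
      _ = 16 * (k + 1) ^ 2 * (k.centralBinom ^ 2 * (3 * k + 1)) := by ring
      _ ≤ 16 * (k + 1) ^ 2 * 16 ^ k := by gcongr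
      _ = (k + 1) ^ 2 * 16 ^ (k + 1) := by ring

section Numerics

variable {ε : ℝ} (k : ℕ)

theorem pow_le_div_centralBinom_sq (hε0 : 0 < ε) (hε : ε < 1 / 2) :
    ε ^ (4 * k + 7) ≤ ε ^ 4 / (8 * (k.centralBinom : ℝ) ^ 2) := by
  have hK : (k.centralBinom : ℝ) ^ 2 ≤ 16 ^ k := by
    have := Nat.centralBinom_sq_mul_le k
    have : k.centralBinom ^ 2 ≤ 16 ^ k := le_of_mul_le_of_one_le_left this (by omega)
    exact_mod_cast this
  have hKpos : (0 : ℝ) < k.centralBinom := by exact_mod_cast k.centralBinom_pos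
  calc ε ^ (4 * k + 7) = ε ^ 4 * ε ^ (4 * k + 3) := by ring
    _ ≤ ε ^ 4 * (1 / 2) ^ (4 * k + 3) := by gcongr
    _ = ε ^ 4 / (8 * 16 ^ k) := by
        rw [one_div, inv_pow, pow_add, pow_mul]
        norm_num
        ring
    _ ≤ ε ^ 4 / (8 * (k.centralBinom : ℝ) ^ 2) := by gcongr

theorem mul_ceil_le_two_pow_mul_rpow (hε0 : 0 < ε) (hε : ε < 1 / 2) :
    ((4 * k + 7) * ⌈2 * (k.centralBinom : ℝ) ^ 2 / ε ^ 4⌉₊ : ℝ) ≤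
      2 ^ (4 * (k + 1)) * ε ^ (-5 : ℝ) := by
  have hKc : (k.centralBinom : ℝ) ^ 2 * (3 * k + 1) ≤ 16 ^ k := by
    exact_mod_cast Nat.centralBinom_sq_mul_le k
  have hK1 : (1 : ℝ) ≤ k.centralBinom := by exact_mod_cast k.centralBinom_pos
  set K : ℝ := ↑k.centralBinom
  have hc : (3 * k + 1 : ℝ) ≤ 16 ^ k := by
    nlinarith [mul_le_mul_of_nonneg_right (one_le_pow₀ hK1 : 1 ≤ K ^ 2)
      (by positivity : (0 : ℝ) ≤ 3 * k + 1)]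
  have hceil : (⌈2 * K ^ 2 / ε ^ 4⌉₊ : ℝ) ≤ 2 * K ^ 2 / ε ^ 4 + 1 :=
    (Nat.ceil_lt_add_one (by positivity)).le
  have hε5 : ε ^ 5 ≤ 1 / 32 := by
    calc ε ^ 5 ≤ (1 / 2) ^ 5 := by gcongr
      _ = 1 / 32 := by norm_num
  have key : (4 * k + 7 : ℝ) * (2 * K ^ 2 * ε + ε ^ 5) ≤ 16 * 16 ^ k := by
    calc (4 * k + 7 : ℝ) * (2 * K ^ 2 * ε + ε ^ 5)
        ≤ 7 * (3 * k + 1) * (2 * K ^ 2 * ε + ε ^ 5) := by gcongr; linarith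
      _ = 7 * (2 * ε * (K ^ 2 * (3 * k + 1)) + ε ^ 5 * (3 * k + 1)) := by ring
      _ ≤ 7 * (2 * ε * 16 ^ k + 1 / 32 * 16 ^ k) := by gcongr
      _ ≤ 16 * 16 ^ k := by nlinarith [pow_pos (by norm_num : (0 : ℝ) < 16) k]
  rw [Real.rpow_neg hε0.le, show (5 : ℝ) = (5 : ℕ) by norm_num, Real.rpow_natCast,
    show 4 * (k + 1) = 4 + 4 * k by ring, pow_add, pow_mul]
  calc ((4 * k + 7) * ⌈2 * K ^ 2 / ε ^ 4⌉₊ : ℝ) ≤ (4 * k + 7) * (2 * K ^ 2 / ε ^ 4 + 1) := by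
        gcongr
    _ = (4 * k + 7 : ℝ) * (2 * K ^ 2 * ε + ε ^ 5) / ε ^ 5 := by field_simp
    _ ≤ 16 * 16 ^ k / ε ^ 5 := by gcongr
    _ = _ := by norm_num [div_eq_mul_inv]

theorem rpow_le_pow_ceil (hε0 : 0 < ε) (hε : ε < 1 / 2) :
    ε ^ ((2 : ℝ) ^ (4 * (k + 1)) * ε ^ (-5 : ℝ)) ≤
      (ε ^ 4 / (8 * (k.centralBinom : ℝ) ^ 2)) ^ ⌈2 * (k.centralBinom : ℝ) ^ 2 / ε ^ 4⌉₊ := by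
  calc ε ^ ((2 : ℝ) ^ (4 * (k + 1)) * ε ^ (-5 : ℝ))
      ≤ ε ^ (((4 * k + 7) * ⌈2 * (k.centralBinom : ℝ) ^ 2 / ε ^ 4⌉₊ : ℕ) : ℝ) :=
        Real.rpow_le_rpow_of_exponent_ge hε0 (by linarith)
          (by exact_mod_cast mul_ceil_le_two_pow_mul_rpow k hε0 hε)
    _ = (ε ^ (4 * k + 7)) ^ ⌈2 * (k.centralBinom : ℝ) ^ 2 / ε ^ 4⌉₊ := by
        rw [Real.rpow_natCast, pow_mul]
    _ ≤ _ := pow_le_pow_left₀ (by positivity) (pow_le_div_centralBinom_sq k hε0 hε) _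

theorem cylinder_size_le (hε0 : 0 < ε) (hε : ε < 1 / 2) {n m : ℕ}
    (hn : 2 ^ (2 * (k + 1)) ≤ n)
    (hm : (ε ^ 4 / (8 * (k.centralBinom : ℝ) ^ 2)) ^ ⌈2 * (k.centralBinom : ℝ) ^ 2 / ε ^ 4⌉₊ *
      (n / k.centralBinom : ℕ) ≤ m) :
    1 / (2 * (2 : ℝ) ^ (2 * (k + 1))) * ε ^ ((2 : ℝ) ^ (4 * (k + 1)) * ε ^ (-5 : ℝ)) * n ≤ m := by
  set K := k.centralBinom
  have hKpos : 0 < K := k.centralBinom_pos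
  have hK4 : K ≤ 2 ^ (2 * (k + 1)) := calc
    K ≤ 4 ^ k := k.centralBinom_le_four_pow
    _ ≤ 4 ^ (k + 1) := Nat.pow_le_pow_right (by norm_num) (by omega)
    _ = 2 ^ (2 * (k + 1)) := by rw [pow_mul]; norm_num
  have hdiv : (n : ℝ) / (2 * K) ≤ (n / K : ℕ) := by
    have h1 : n < K * (n / K + 1) := Nat.lt_mul_div_succ n hKpos
    have h2 : 1 ≤ n / K := (Nat.one_le_div_iff hKpos).2 (hK4.trans hn)
    rw [div_le_iff₀ (by positivity)]
    have : (n : ℝ) < K * ((n / K : ℕ) + 1) := by exact_mod_cast h1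
    have : (1 : ℝ) ≤ (n / K : ℕ) := by exact_mod_cast h2
    nlinarith
  calc 1 / (2 * (2 : ℝ) ^ (2 * (k + 1))) * ε ^ ((2 : ℝ) ^ (4 * (k + 1)) * ε ^ (-5 : ℝ)) * n
      ≤ 1 / (2 * K) * (ε ^ 4 / (8 * (K : ℝ) ^ 2)) ^ ⌈2 * (K : ℝ) ^ 2 / ε ^ 4⌉₊ * n := by
        gcongr
        · exact_mod_cast hK4
        · exact rpow_le_pow_ceil k hε0 hε
    _ = (ε ^ 4 / (8 * (K : ℝ) ^ 2)) ^ ⌈2 * (K : ℝ) ^ 2 / ε ^ 4⌉₊ * (n / (2 * K)) := by ring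
    _ ≤ m := (by gcongr : _ ≤ _ * ((n / K : ℕ) : ℝ)).trans hm

end Numerics

/-- Lemma 6: for `0 < ε < 1/2`, every 2-edge-colored complete graph (red graph `R`,
blue graph `Rᶜ`) on at least `2^(2k)` vertices has, in one of the colors, a
`k`-cylinder with parts of equal size in which every pair is `ε`-regular with
density at least `1/2`, each part of size at least `(1/(2·2^(2k))) ε^(2^(4k) ε⁻⁵) n`. -/
theorem dense_regular_cylinder_in_a_color (ε : ℝ) (hε0 : 0 < ε) (hε : ε < 1 / 2)
    (k : ℕ) (hk : 0 < k)
    (V : Type) [Fintype V] [DecidableEq V] (hV : 2 ^ (2 * k) ≤ Fintype.card V)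
    (R : SimpleGraph V) :
    ∃ G' : SimpleGraph V, (G' = R ∨ G' = Rᶜ) ∧
      ∃ P : Fin k → Finset V,
        (∀ i j, i ≠ j → Disjoint (P i) (P j)) ∧
        (∀ i j, (P i).card = (P j).card) ∧
        (∀ i j, i < j →
          EpsRegular G' ε (P i) (P j) ∧ 1 / 2 ≤ density G' (P i) (P j)) ∧
        ∀ i, (1 / (2 * (2 : ℝ) ^ (2 * k))) * ε ^ ((2 : ℝ) ^ (4 * k) * ε ^ (-5 : ℝ))
          * (Fintype.card V : ℝ) ≤ ((P i).card : ℝ) := by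
  obtain ⟨k, rfl⟩ : ∃ k', k = k' + 1 := ⟨k - 1, by omega⟩
  set K := k.centralBinom
  obtain ⟨W₀, hdisj₀, hcard₀⟩ :=
    exists_pairwise_disjoint_card_eq (K := K) (Nat.mul_div_le (Fintype.card V) K)
  obtain ⟨m, W, hsub, hcard, hm, hreg⟩ := exists_pairwise_epsRegular_of_le_energy R hε0
    (by linarith) ⌈2 * (K : ℝ) ^ 2 / ε ^ 4⌉₊ W₀ hcard₀ (by
      have := Nat.le_ceil (2 * (K : ℝ) ^ 2 / ε ^ 4)
      rw [div_le_iff₀ (by positivity)] at this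
      simp only [Fintype.card_fin]
      linarith [energy_nonneg R W₀])
  simp only [Fintype.card_fin] at hm
  have hsize := cylinder_size_le k hε0 hε hV hm
  have hdisj : ∀ i j, i ≠ j → Disjoint (W i) (W j) := fun i j hij =>
    (hdisj₀ i j hij).mono (hsub i) (hsub j)
  have hn : (0 : ℝ) < Fintype.card V := by exact_mod_cast (pow_pos two_pos _).trans_le hV
  have hne : ∀ i, (W i).Nonempty := fun i => card_pos.1 <| hcard i ▸ Nat.cast_pos.1
    ((by positivity : (0 : ℝ) < _).trans_le hsize)
  obtain ⟨G', hG', t, ht, hpair⟩ := exists_color_clique_of_pairwise_epsRegular R hε0.le W hdisj hne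
    hreg (k := k) (by simp [K, Nat.centralBinom_eq_two_mul_choose, two_mul])
  set e := t.orderEmbOfFin ht
  refine ⟨G', hG', W ∘ e, fun i j hij => hdisj _ _ (e.injective.ne hij), fun i j => by simp [hcard],
    fun i j hij => hpair _ (t.orderEmbOfFin_mem ht i) _ (t.orderEmbOfFin_mem ht j)
      (e.strictMono hij).ne, fun i => ?_⟩
  simpa [hcard] using hsize
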